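/- arXiv:0705.0734 — 2 statements merged into one kernel-verified Lean document; each statement's English description precedes it below -/
import Mathlib

section
/- Let α : S → T be a mapping between c-semirings with α(0) = 0 and α(1) = 1, satisfying: for all positive integers m, n and families u_{ij}, v_{ij} in S, if Σ_i Π_j α(u_{ij}) < Σ_i Π_j α(v_{ij}) in T then Σ_i Π_j u_{ij} < Σ_i Π_j v_{ij} in S. Then α preserves products: α(u × v) = α(u) × α(v) for all u, v ∈ S. Consequently α is a semiring homomorphism. -/
/-! The condition forces `α` to send equal sums of products in `S` to equal ones in `T`.
Indeed, if `Σ u = Σ v` in `S`, then the families `u ++ u` and `u ++ v` have the same value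
`Σ u` in `S`, while their images are `U` and `U + V` in `T`; so `U < U + V` is impossible,
i.e. `V ≤ U`, and by symmetry `U = V`. Applied to `uv · 1 = u · v` and
`(u + v) + (u + v) = u + v` this gives multiplicativity and additivity. -/

structure CSemiring (S : Type*) where
  add : S → S → S
  mul : S → S → S
  zero : S
  one : S
  add_comm : ∀ a b, add a b = add b a
  add_assoc : ∀ a b c, add (add a b) c = add a (add b c)
  add_idem : ∀ a, add a a = a
  add_zero : ∀ a, add a zero = a
  add_one : ∀ a, add a one = one
  mul_comm : ∀ a b, mul a b = mul b a
  mul_assoc : ∀ a b c, mul (mul a b) c = mul a (mul b c)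
  mul_one : ∀ a, mul a one = a
  mul_zero : ∀ a, mul a zero = zero
  left_distrib : ∀ a b c, mul a (add b c) = add (mul a b) (mul a c)

/-- The induced order: `a ≤ b` iff `a + b = b`. -/
def CSemiring.le {S : Type*} (C : CSemiring S) (a b : S) : Prop := C.add a b = b

/-- Induced strict order. -/
def CSemiring.lt {S : Type*} (C : CSemiring S) (a b : S) : Prop := C.le a b ∧ a ≠ b

/-- Semiring homomorphism: preserves 0, 1, + and ×. -/
def CSemiring.isHom {S T : Type*} (C : CSemiring S) (D : CSemiring T) (α : S → T) : Prop :=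
  α C.zero = D.zero ∧ α C.one = D.one ∧
  (∀ a b, α (C.add a b) = D.add (α a) (α b)) ∧
  (∀ a b, α (C.mul a b) = D.mul (α a) (α b))

/-- Product over a list (finite multiset) of elements. -/
def CSemiring.listProd {S : Type*} (C : CSemiring S) (l : List S) : S := l.foldr C.mul C.one

/-- Product of a finite family. -/
def CSemiring.finProd {S : Type*} (C : CSemiring S) {m : ℕ} (f : Fin m → S) : S :=
  C.listProd (List.ofFn f)

/-- Sum of a finite family. -/
def CSemiring.finSum {S : Type*} (C : CSemiring S) {n : ℕ} (f : Fin n → S) : S :=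
  (List.ofFn f).foldr C.add C.zero

/-- Condition (Equation 1): for all positive m,n and families u,v,
if Σᵢ Πⱼ α(uᵢⱼ) < Σᵢ Πⱼ α(vᵢⱼ) in T then Σᵢ Πⱼ uᵢⱼ < Σᵢ Πⱼ vᵢⱼ in S. -/
def CSemiring.eq1Cond {S T : Type*} (C : CSemiring S) (D : CSemiring T) (α : S → T) : Prop :=
  ∀ (m n : ℕ), 0 < m → 0 < n → ∀ (u v : Fin n → Fin m → S),
    D.lt (D.finSum fun i => D.finProd fun j => α (u i j))
         (D.finSum fun i => D.finProd fun j => α (v i j)) →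
    C.lt (C.finSum fun i => C.finProd fun j => u i j)
         (C.finSum fun i => C.finProd fun j => v i j)

theorem Fin.comp_append {α β : Type*} {n n' : ℕ} (f : α → β) (a : Fin n → α) (b : Fin n' → α) :
    f ∘ Fin.append a b = Fin.append (f ∘ a) (f ∘ b) := by
  funext i
  refine Fin.addCases (fun i => ?_) (fun i => ?_) i <;> simp

namespace CSemiring

variable {S T : Type*}

def sumProd (C : CSemiring S) {n m : ℕ} (u : Fin n → Fin m → S) : S :=
  C.finSum fun i => C.finProd fun j => u i j

theorem le_add_right (C : CSemiring S) (a b : S) : C.le a (C.add a b) := by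
  rw [le, ← C.add_assoc, C.add_idem]

theorem eq_of_not_lt_add_of_not_lt_add (C : CSemiring S) {a b : S}
    (hab : ¬ C.lt a (C.add a b)) (hba : ¬ C.lt b (C.add b a)) : a = b := by
  have ha : a = C.add a b := not_not.mp fun hne => hab ⟨C.le_add_right a b, hne⟩
  have hb : b = C.add b a := not_not.mp fun hne => hba ⟨C.le_add_right b a, hne⟩
  rw [ha, C.add_comm, ← hb]

theorem foldr_add (C : CSemiring S) (l : List S) (b : S) :
    l.foldr C.add b = C.add (l.foldr C.add C.zero) b := by
  induction l with
  | nil => rw [List.foldr_nil, List.foldr_nil, C.add_comm, C.add_zero]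
  | cons a l ih => rw [List.foldr_cons, List.foldr_cons, ih, C.add_assoc]

theorem finSum_append (C : CSemiring S) {n n' : ℕ} (f : Fin n → S) (g : Fin n' → S) :
    C.finSum (Fin.append f g) = C.add (C.finSum f) (C.finSum g) := by
  rw [finSum, List.ofFn_fin_append, List.foldr_append, foldr_add]
  rfl

theorem sumProd_append (C : CSemiring S) {n n' m : ℕ} (u : Fin n → Fin m → S)
    (v : Fin n' → Fin m → S) :
    C.sumProd (Fin.append u v) = C.add (C.sumProd u) (C.sumProd v) := by
  change C.finSum (C.finProd ∘ Fin.append u v) = _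
  rw [Fin.comp_append, finSum_append]
  rfl

theorem eq1Cond.map_sumProd_eq {C : CSemiring S} {D : CSemiring T} {α : S → T}
    (hα : C.eq1Cond D α) {n m : ℕ} (hn : 0 < n) (hm : 0 < m) {u v : Fin n → Fin m → S}
    (huv : C.sumProd u = C.sumProd v) :
    D.sumProd (fun i j => α (u i j)) = D.sumProd (fun i j => α (v i j)) := by
  have hcomp (w w' : Fin n → Fin m → S) : (fun i j => α (Fin.append w w' i j)) =
      Fin.append (fun i j => α (w i j)) (fun i j => α (w' i j)) :=
    Fin.comp_append (fun r j => α (r j)) w w'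
  have not_lt (u v : Fin n → Fin m → S) (huv : C.sumProd u = C.sumProd v) :
      ¬ D.lt (D.sumProd fun i j => α (u i j))
        (D.add (D.sumProd fun i j => α (u i j)) (D.sumProd fun i j => α (v i j))) := by
    intro hlt
    have h : D.lt (D.sumProd fun i j => α (Fin.append u u i j))
          (D.sumProd fun i j => α (Fin.append u v i j)) →
        C.lt (C.sumProd (Fin.append u u)) (C.sumProd (Fin.append u v)) :=
      hα m (n + n) hm (by omega) _ _
    rw [hcomp, hcomp, sumProd_append, sumProd_append, D.add_idem] at h
    exact (h hlt).2 (by rw [sumProd_append, sumProd_append, huv])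
  exact D.eq_of_not_lt_add_of_not_lt_add (not_lt u v huv) (not_lt v u huv.symm)

theorem finSum_one (C : CSemiring S) (f : Fin 1 → S) : C.finSum f = f 0 := by
  simp [finSum, C.add_zero]

theorem finSum_two (C : CSemiring S) (f : Fin 2 → S) : C.finSum f = C.add (f 0) (f 1) := by
  simp [finSum, C.add_zero]

theorem finProd_one (C : CSemiring S) (f : Fin 1 → S) : C.finProd f = f 0 := by
  simp [finProd, listProd, C.mul_one]

theorem finProd_two (C : CSemiring S) (f : Fin 2 → S) : C.finProd f = C.mul (f 0) (f 1) := by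
  simp [finProd, listProd, C.mul_one]

theorem eq1Cond.map_mul {C : CSemiring S} {D : CSemiring T} {α : S → T} (hα : C.eq1Cond D α)
    (h1 : α C.one = D.one) (u v : S) : α (C.mul u v) = D.mul (α u) (α v) := by
  simpa [sumProd, finSum_one, finProd_two, h1, D.mul_one] using
    hα.map_sumProd_eq one_pos two_pos (u := ![![C.mul u v, C.one]]) (v := ![![u, v]])
      (by simp [sumProd, finSum_one, finProd_two, C.mul_one])

theorem eq1Cond.map_add {C : CSemiring S} {D : CSemiring T} {α : S → T} (hα : C.eq1Cond D α)
    (u v : S) : α (C.add u v) = D.add (α u) (α v) := by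
  simpa [sumProd, finSum_two, finProd_one, D.add_idem] using
    hα.map_sumProd_eq two_pos one_pos (u := ![![C.add u v], ![C.add u v]]) (v := ![![u], ![v]])
      (by simp [sumProd, finSum_two, finProd_one, C.add_idem])

end CSemiring

theorem stmt10 {S T : Type*} (C : CSemiring S) (D : CSemiring T) (α : S → T)
    (h0 : α C.zero = D.zero) (h1 : α C.one = D.one)
    (heq1 : C.eq1Cond D α) :
    (∀ u v : S, α (C.mul u v) = D.mul (α u) (α v)) ∧ C.isHom D α :=
  ⟨heq1.map_mul h1, h0, h1, heq1.map_add, heq1.map_mul h1⟩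
end

section
/- Let ⟨α, γ⟩ : S ⇄ T be a Galois insertion between c-semirings (α is monotonic with upper adjoint γ, α ∘ γ = id_T). If α is order-preserving in the sense that Π_{x∈I1} α(x) ≤ Π_{x∈I2} α(x) implies Π_{x∈I1} x ≤ Π_{x∈I2} x for any finite multisets I1, I2 of elements of S, then α is an order isomorphism: for all x, y ∈ S, x ≤ y iff α(x) ≤ α(y), and α is bijective. -/
namespace CSemiring

variable {S T : Type*} (C : CSemiring S)

theorem listProd_singleton (x : S) : C.listProd [x] = x :=
  C.mul_one x

theorem le_refl (a : S) : C.le a a :=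
  C.add_idem a

theorem le_antisymm {a b : S} (hab : C.le a b) (hba : C.le b a) : a = b :=
  calc a = C.add b a := hba.symm
    _ = C.add a b := C.add_comm b a
    _ = b := hab

theorem injective_of_le_reflect (D : CSemiring T) {α : S → T}
    (reflect : ∀ x y, D.le (α x) (α y) → C.le x y) : Function.Injective α := fun a b hab =>
  C.le_antisymm (reflect a b (hab ▸ D.le_refl _)) (reflect b a (hab ▸ D.le_refl _))

end CSemiring

theorem stmt12_general {S T : Type*} (C : CSemiring S) (D : CSemiring T)
    (α : S → T) (γ : T → S)
    (monoα : ∀ a b, C.le a b → D.le (α a) (α b))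
    (ins : ∀ y : T, α (γ y) = y)
    (op : ∀ l1 l2 : List S,
      D.le (D.listProd (l1.map α)) (D.listProd (l2.map α)) →
      C.le (C.listProd l1) (C.listProd l2)) :
    (∀ x y : S, C.le x y ↔ D.le (α x) (α y)) ∧ Function.Bijective α := by
  have reflect : ∀ x y, D.le (α x) (α y) → C.le x y := fun x y => by
    simpa only [List.map, CSemiring.listProd_singleton] using op [x] [y]
  exact ⟨fun x y => ⟨monoα x y, reflect x y⟩, C.injective_of_le_reflect D reflect,
    fun y => ⟨γ y, ins y⟩⟩

theorem stmt12 {S T : Type*} (C : CSemiring S) (D : CSemiring T)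
    (α : S → T) (γ : T → S)
    (monoα : ∀ a b, C.le a b → D.le (α a) (α b))
    (monoγ : ∀ a b, D.le a b → C.le (γ a) (γ b))
    (adj : ∀ (x : S) (y : T), D.le (α x) y ↔ C.le x (γ y))
    (ins : ∀ y : T, α (γ y) = y)
    (op : ∀ l1 l2 : List S,
      D.le (D.listProd (l1.map α)) (D.listProd (l2.map α)) →
      C.le (C.listProd l1) (C.listProd l2)) :
    (∀ x y : S, C.le x y ↔ D.le (α x) (α y)) ∧ Function.Bijective α :=
  stmt12_general C D α γ monoα ins op
end
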